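/- arXiv:2512.16474 — 2 statements merged into one kernel-verified Lean document; each statement's English description precedes it below -/
import Mathlib

section
/- Let P be a finite partial interleaving between subsets of T₁ and T₂ with d_P(T₁, T₂) > 0, and let Q be a finite partial interleaving that extends P such that every arrow a of Q satisfies shift_P(a) < d_P(T₁, T₂). Then d_Q(T₁, T₂) ≥ d_P(T₁, T₂). -/
open Set

/-- An abstract merge tree: the topological realization of a finite rooted tree with a
height function that is strictly increasing towards the root (the root sits at height ∞,
so above every point there is a unique ancestor at every height). The ancestor
relation `le` (`x ⪯ y` = `y` is an ancestor of `x`) abstracts the `f`-monotone paths. -/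
structure MergeTree where
  X : Type
  le : X → X → Prop
  f : X → ℝ
  top : TopologicalSpace X
  nonempty : Nonempty X
  le_refl : ∀ x, le x x
  le_trans : ∀ x y z, le x y → le y z → le x z
  le_antisymm : ∀ x y, le x y → le y x → x = y
  f_mono : ∀ x y, le x y → f x ≤ f y
  f_strictMono : ∀ x y, le x y → f x = f y → x = y
  f_cont : @Continuous X ℝ top inferInstance f
  /-- the unique ancestor of `x` at height `h` (junk for `h < f x`). -/
  anc : X → ℝ → X
  le_anc : ∀ x h, f x ≤ h → le x (anc x h)
  f_anc : ∀ x h, f x ≤ h → f (anc x h) = h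
  anc_unique : ∀ x y, le x y → y = anc x (f y)
  /-- rootedness: any two points have a common ancestor. -/
  directed : ∀ x y, ∃ z, le x z ∧ le y z
  /-- tree-ness: the ancestors of a point are totally ordered. -/
  anc_total : ∀ x y z, le x y → le x z → le y z ∨ le z y
  /-- the (finitely many) vertices of the underlying combinatorial tree. -/
  V : Set X
  V_finite : V.Finite

/-- `(S, φ)` is a partial up-map from `S ⊆ T₁` to `T₂`. -/
def IsUpMap (T1 T2 : MergeTree) (S : Set T1.X) (φ : T1.X → T2.X) : Prop :=
  (∀ x ∈ S, T1.f x ≤ T2.f (φ x)) ∧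
  ∀ x1 ∈ S, ∀ x2 ∈ S, T1.le x1 x2 → T2.le (φ x1) (φ x2)

/-- The partial up-map `(S, φ)` extends the partial up-map `(S', φ')`. -/
def UpMapExtends (T1 T2 : MergeTree) (S : Set T1.X) (φ : T1.X → T2.X)
    (S' : Set T1.X) (φ' : T1.X → T2.X) : Prop :=
  S' ⊆ S ∧ ∀ x ∈ S', T2.le (φ' x) (φ x)

/-- The partial up-map `(S, φ)` uses the partial up-map `(S', φ')`. -/
def UpMapUses (T1 T2 : MergeTree) (S : Set T1.X) (φ : T1.X → T2.X)
    (S' : Set T1.X) (φ' : T1.X → T2.X) : Prop :=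
  S' ⊆ S ∧ ∀ x ∈ S', φ x = φ' x

/-- The map `φ↑[δ]`, sending `x` to the ancestor of `φ x` at height
`max (f₁ x + δ) (f₂ (φ x))`. -/
noncomputable def liftMap (T1 T2 : MergeTree) (φ : T1.X → T2.X) (δ : ℝ) : T1.X → T2.X :=
  fun x => T2.anc (φ x) (max (T1.f x + δ) (T2.f (φ x)))

/-- `(S₁, φ, S₂, ψ)` is a partial interleaving between `S₁ ⊆ T₁` and `S₂ ⊆ T₂`. -/
def IsPartialInterleaving (T1 T2 : MergeTree) (S1 : Set T1.X) (φ : T1.X → T2.X)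
    (S2 : Set T2.X) (ψ : T2.X → T1.X) : Prop :=
  IsUpMap T1 T2 S1 φ ∧ IsUpMap T2 T1 S2 ψ ∧
  (∀ x ∈ S1, ∀ y ∈ S2, T2.le (φ x) y → T1.le x (ψ y)) ∧
  (∀ x ∈ S1, ∀ y ∈ S2, T1.le (ψ y) x → T2.le y (φ x))

/-- The partial interleaving `(S1, φ, S2, ψ)` extends `(S1', φ', S2', ψ')`. -/
def InterExtends (T1 T2 : MergeTree) (S1 : Set T1.X) (φ : T1.X → T2.X)
    (S2 : Set T2.X) (ψ : T2.X → T1.X)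
    (S1' : Set T1.X) (φ' : T1.X → T2.X) (S2' : Set T2.X) (ψ' : T2.X → T1.X) : Prop :=
  UpMapExtends T1 T2 S1 φ S1' φ' ∧ UpMapExtends T2 T1 S2 ψ S2' ψ'

/-- The partial interleaving `(S1, φ, S2, ψ)` uses `(S1', φ', S2', ψ')`:
its component maps agree with those of the latter on its domains. -/
def InterUses (T1 T2 : MergeTree) (S1 : Set T1.X) (φ : T1.X → T2.X)
    (S2 : Set T2.X) (ψ : T2.X → T1.X)
    (S1' : Set T1.X) (φ' : T1.X → T2.X) (S2' : Set T2.X) (ψ' : T2.X → T1.X) : Prop :=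
  UpMapUses T1 T2 S1 φ S1' φ' ∧ UpMapUses T2 T1 S2 ψ S2' ψ'

/-- A complete interleaving between `T₁` and `T₂`. -/
def IsInterleaving (T1 T2 : MergeTree) (α : T1.X → T2.X) (β : T2.X → T1.X) : Prop :=
  IsPartialInterleaving T1 T2 univ α univ β

/-- The shift `sup {f₂(φ x) − f₁ x | x ∈ S}` of a partial up-map (valued in `EReal`). -/
noncomputable def mapShift (T1 T2 : MergeTree) (S : Set T1.X) (φ : T1.X → T2.X) : EReal :=
  sSup ((fun x => ((T2.f (φ x) - T1.f x : ℝ) : EReal)) '' S)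

/-- The shift of a partial interleaving. -/
noncomputable def interShift (T1 T2 : MergeTree) (S1 : Set T1.X) (φ : T1.X → T2.X)
    (S2 : Set T2.X) (ψ : T2.X → T1.X) : EReal :=
  max (mapShift T1 T2 S1 φ) (mapShift T2 T1 S2 ψ)

/-- `α` and `β` are δ-compatible maps between `T₁` and `T₂` (Morozov et al.). -/
def Compatible (T1 T2 : MergeTree) (δ : ℝ) (α : T1.X → T2.X) (β : T2.X → T1.X) : Prop :=
  @Continuous T1.X T2.X T1.top T2.top α ∧ @Continuous T2.X T1.X T2.top T1.top β ∧
  (∀ x, T2.f (α x) = T1.f x + δ) ∧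
  (∀ y, T1.f (β y) = T2.f y + δ) ∧
  (∀ x, β (α x) = T1.anc x (T1.f x + 2 * δ)) ∧
  (∀ y, α (β y) = T2.anc y (T2.f y + 2 * δ))

/-- The interleaving distance: the infimum δ for which δ-compatible maps exist. -/
noncomputable def intDist (T1 T2 : MergeTree) : EReal :=
  sInf {d : EReal | ∃ δ : ℝ, 0 ≤ δ ∧ d = (δ : EReal) ∧ ∃ α β, Compatible T1 T2 δ α β}

/-- The set of critical values Δ(T₁, T₂). -/
def DeltaSet (T1 T2 : MergeTree) : Set ℝ :=
  {d | ∃ v ∈ T1.V, ∃ w ∈ T2.V, d = |T1.f v - T2.f w|} ∪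
  {d | ∃ v1 ∈ T1.V, ∃ v2 ∈ T1.V, d = |T1.f v1 - T1.f v2| / 2} ∪
  {d | ∃ w1 ∈ T2.V, ∃ w2 ∈ T2.V, d = |T2.f w1 - T2.f w2| / 2}

/-- The arrow `(x, y)` lies in the fan `F[A_φ]` of the partial up-map `(S, φ)`. -/
def InFan (T1 T2 : MergeTree) (S : Set T1.X) (φ : T1.X → T2.X) (x : T1.X) (y : T2.X) : Prop :=
  T1.f x ≤ T2.f y ∧ ∃ x0 ∈ S, φ x0 = y ∧ T1.le x0 x

open Classical in
/-- The `(S, φ)`-residual shift of an arrow `(x, y)`. -/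
noncomputable def resArrowShift (T1 T2 : MergeTree) (S : Set T1.X) (φ : T1.X → T2.X)
    (x : T1.X) (y : T2.X) : ℝ :=
  if InFan T1 T2 S φ x y then 0 else T2.f y - T1.f x

/-- The `(S, φ)`-residual shift of a partial up-map `(S', φ')`. -/
noncomputable def resMapShift (T1 T2 : MergeTree) (S : Set T1.X) (φ : T1.X → T2.X)
    (S' : Set T1.X) (φ' : T1.X → T2.X) : EReal :=
  sSup ((fun x => ((resArrowShift T1 T2 S φ x (φ' x) : ℝ) : EReal)) '' S')

/-- The `P`-residual shift of a partial interleaving `P' = (S1', φ', S2', ψ')`,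
where `P = (S1, φ, S2, ψ)`. -/
noncomputable def resInterShift (T1 T2 : MergeTree)
    (S1 : Set T1.X) (φ : T1.X → T2.X) (S2 : Set T2.X) (ψ : T2.X → T1.X)
    (S1' : Set T1.X) (φ' : T1.X → T2.X) (S2' : Set T2.X) (ψ' : T2.X → T1.X) : EReal :=
  max (resMapShift T1 T2 S1 φ S1' φ') (resMapShift T2 T1 S2 ψ S2' ψ')

/-- `(α, β)` is a complete interleaving extending the partial interleaving `(S1, φ, S2, ψ)`. -/
def IsCompleteExtension (T1 T2 : MergeTree)
    (S1 : Set T1.X) (φ : T1.X → T2.X) (S2 : Set T2.X) (ψ : T2.X → T1.X)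
    (α : T1.X → T2.X) (β : T2.X → T1.X) : Prop :=
  IsInterleaving T1 T2 α β ∧ InterExtends T1 T2 univ α univ β S1 φ S2 ψ

/-- The `P`-residual interleaving distance `d_P(T₁, T₂)`. -/
noncomputable def resDist (T1 T2 : MergeTree)
    (S1 : Set T1.X) (φ : T1.X → T2.X) (S2 : Set T2.X) (ψ : T2.X → T1.X) : EReal :=
  sInf {d : EReal | ∃ α β, IsCompleteExtension T1 T2 S1 φ S2 ψ α β ∧
    d = resInterShift T1 T2 S1 φ S2 ψ univ α univ β}

/-- The `P`-critical points of `T₁`. -/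
def critPts1 (T1 T2 : MergeTree) (S1 : Set T1.X) (S2 : Set T2.X) (ψ : T2.X → T1.X) :
    Set T1.X :=
  T1.V ∪ S1 ∪ ψ '' S2

/-- The `P`-critical points of `T₂`. -/
def critPts2 (T1 T2 : MergeTree) (S1 : Set T1.X) (φ : T1.X → T2.X) (S2 : Set T2.X) :
    Set T2.X :=
  T2.V ∪ S2 ∪ φ '' S1

/-- The set of `P`-critical values `Δ[P](T₁, T₂)`. -/
def DeltaPSet (T1 T2 : MergeTree)
    (S1 : Set T1.X) (φ : T1.X → T2.X) (S2 : Set T2.X) (ψ : T2.X → T1.X) : Set ℝ :=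
  {d | ∃ v ∈ critPts1 T1 T2 S1 S2 ψ, ∃ w ∈ critPts2 T1 T2 S1 φ S2, d = |T1.f v - T2.f w|} ∪
  {d | ∃ v1 ∈ T1.V, ∃ v2 ∈ T1.V, d = |T1.f v1 - T1.f v2| / 2} ∪
  {d | ∃ w1 ∈ T2.V, ∃ w2 ∈ T2.V, d = |T2.f w1 - T2.f w2| / 2}

/-- The partial interleaving `(S1', φ', S2', ψ')` uses a `P`-critical pair whose
corresponding critical value is `d`, where `P = (S1, φ, S2, ψ)` supplies the critical
points. The four disjuncts are: arrow critical pairs in either direction, and zigzag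
critical pairs on either tree. -/
def UsesCritPair (T1 T2 : MergeTree)
    (S1 : Set T1.X) (φ : T1.X → T2.X) (S2 : Set T2.X) (ψ : T2.X → T1.X)
    (S1' : Set T1.X) (φ' : T1.X → T2.X) (S2' : Set T2.X) (ψ' : T2.X → T1.X) (d : ℝ) : Prop :=
  (∃ v ∈ critPts1 T1 T2 S1 S2 ψ, ∃ w ∈ critPts2 T1 T2 S1 φ S2,
      T1.f v ≤ T2.f w ∧ d = T2.f w - T1.f v ∧ v ∈ S1' ∧ φ' v = w) ∨
  (∃ w ∈ critPts2 T1 T2 S1 φ S2, ∃ v ∈ critPts1 T1 T2 S1 S2 ψ,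
      T2.f w ≤ T1.f v ∧ d = T1.f v - T2.f w ∧ w ∈ S2' ∧ ψ' w = v) ∨
  (∃ v1 ∈ T1.V, ∃ v2 ∈ T1.V, d = (T1.f v2 - T1.f v1) / 2 ∧
      ∃ y, T2.f y = T1.f v1 + d ∧ v1 ∈ S1' ∧ φ' v1 = y ∧ y ∈ S2' ∧ ψ' y = v2) ∨
  (∃ w1 ∈ T2.V, ∃ w2 ∈ T2.V, d = (T2.f w2 - T2.f w1) / 2 ∧
      ∃ x, T1.f x = T2.f w1 + d ∧ w1 ∈ S2' ∧ ψ' w1 = x ∧ x ∈ S1' ∧ φ' x = w2)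

/-- `Q = (SQ1, φQ, SQ2, ψQ)` is a `P`-augmentation, `P = (S1, φ, S2, ψ)`. -/
def IsAugmentation (T1 T2 : MergeTree)
    (S1 : Set T1.X) (φ : T1.X → T2.X) (S2 : Set T2.X) (ψ : T2.X → T1.X)
    (SQ1 : Set T1.X) (φQ : T1.X → T2.X) (SQ2 : Set T2.X) (ψQ : T2.X → T1.X) : Prop :=
  IsPartialInterleaving T1 T2 SQ1 φQ SQ2 ψQ ∧
  InterExtends T1 T2 SQ1 φQ SQ2 ψQ S1 φ S2 ψ ∧
  resInterShift T1 T2 S1 φ S2 ψ SQ1 φQ SQ2 ψQ ≤ resDist T1 T2 S1 φ S2 ψ ∧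
  resDist T1 T2 SQ1 φQ SQ2 ψQ < resDist T1 T2 S1 φ S2 ψ

/-- Two partial interleavings are the same (same domains, agreeing maps on them). -/
def SameInter (T1 T2 : MergeTree)
    (S1 : Set T1.X) (φ : T1.X → T2.X) (S2 : Set T2.X) (ψ : T2.X → T1.X)
    (S1' : Set T1.X) (φ' : T1.X → T2.X) (S2' : Set T2.X) (ψ' : T2.X → T1.X) : Prop :=
  S1 = S1' ∧ S2 = S2' ∧ (∀ x ∈ S1, φ x = φ' x) ∧ (∀ y ∈ S2, ψ y = ψ' y)

/-- `Q` is a minimal `P`-augmentation: it does not (properly) extend any other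
`P`-augmentation. -/
def IsMinimalAugmentation (T1 T2 : MergeTree)
    (S1 : Set T1.X) (φ : T1.X → T2.X) (S2 : Set T2.X) (ψ : T2.X → T1.X)
    (SQ1 : Set T1.X) (φQ : T1.X → T2.X) (SQ2 : Set T2.X) (ψQ : T2.X → T1.X) : Prop :=
  IsAugmentation T1 T2 S1 φ S2 ψ SQ1 φQ SQ2 ψQ ∧
  ∀ SR1 φR SR2 ψR, IsAugmentation T1 T2 S1 φ S2 ψ SR1 φR SR2 ψR →
    InterExtends T1 T2 SQ1 φQ SQ2 ψQ SR1 φR SR2 ψR →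
    SameInter T1 T2 SQ1 φQ SQ2 ψQ SR1 φR SR2 ψR

/-- Domain of the relative difference of two partial maps. -/
def relDiffDom {X Y : Type} (SQ : Set X) (φQ : X → Y) (S : Set X) (φ : X → Y) : Set X :=
  SQ \ {x | x ∈ S ∧ φQ x = φ x}

/-- `P = (S1, φ, S2, ψ)` is dominant: the shift of each of its arrows strictly exceeds
`d_P(T₁, T₂)`. -/
def DominantInter (T1 T2 : MergeTree)
    (S1 : Set T1.X) (φ : T1.X → T2.X) (S2 : Set T2.X) (ψ : T2.X → T1.X) : Prop :=
  (∀ x ∈ S1, resDist T1 T2 S1 φ S2 ψ < ((T2.f (φ x) - T1.f x : ℝ) : EReal)) ∧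
  (∀ y ∈ S2, resDist T1 T2 S1 φ S2 ψ < ((T1.f (ψ y) - T2.f y : ℝ) : EReal))

/-- A partial interleaving is locally correct: for every restriction `R` of it,
`d_R(T₁, T₂) ≥ shift_R(P)`. -/
def LocallyCorrectPartial (T1 T2 : MergeTree)
    (S1 : Set T1.X) (φ : T1.X → T2.X) (S2 : Set T2.X) (ψ : T2.X → T1.X) : Prop :=
  ∀ S1' ⊆ S1, ∀ S2' ⊆ S2,
    resInterShift T1 T2 S1' φ S2' ψ S1 φ S2 ψ ≤ resDist T1 T2 S1' φ S2' ψ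

/-- A complete interleaving `(α, β)` is locally correct: for every restriction `R` of it,
`d_R(T₁, T₂) = shift_R(I)`. -/
def LocallyCorrect (T1 T2 : MergeTree) (α : T1.X → T2.X) (β : T2.X → T1.X) : Prop :=
  ∀ S1' : Set T1.X, ∀ S2' : Set T2.X,
    resDist T1 T2 S1' α S2' β = resInterShift T1 T2 S1' α S2' β univ α univ β

/-
The P-residual shift of a complete P-extension I obeys
shift_P(I) ≤ max(shift_Q(I), shift_P(Q)) whenever I also extends Q: an arrow of I outside the
fan of Q is charged at its full shift by shift_Q(I), and an arrow in the fan of Q lies above an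
arrow of Q, whose P-residual shift is at least as large. Since Q is finite, shift_P(Q) is a
maximum of values below d_P, hence itself below d_P; so every complete Q-extension I, being a
P-extension, satisfies d_P ≤ shift_P(I), which forces d_P ≤ shift_Q(I).
-/

theorem Set.Finite.sSup_lt {α : Type*} [CompleteLinearOrder α] {s : Set α} {a : α}
    (hs : s.Finite) (ha : ⊥ < a) (h : ∀ x ∈ s, x < a) : sSup s < a := by
  rcases s.eq_empty_or_nonempty with rfl | hne
  · simpa using ha
  · exact (hs.csSup_lt_iff hne).2 h

section ResidualShift

variable {T1 T2 : MergeTree}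

theorem UpMapExtends.trans {S S' S'' : Set T1.X} {φ φ' φ'' : T1.X → T2.X}
    (h : UpMapExtends T1 T2 S φ S' φ') (h' : UpMapExtends T1 T2 S' φ' S'' φ'') :
    UpMapExtends T1 T2 S φ S'' φ'' :=
  ⟨h'.1.trans h.1, fun x hx => T2.le_trans _ _ _ (h'.2 x hx) (h.2 x (h'.1 hx))⟩

theorem IsCompleteExtension.of_interExtends {S1 SQ1 : Set T1.X} {φ φQ α : T1.X → T2.X}
    {S2 SQ2 : Set T2.X} {ψ ψQ β : T2.X → T1.X}
    (hI : IsCompleteExtension T1 T2 SQ1 φQ SQ2 ψQ α β)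
    (hQ : InterExtends T1 T2 SQ1 φQ SQ2 ψQ S1 φ S2 ψ) :
    IsCompleteExtension T1 T2 S1 φ S2 ψ α β :=
  ⟨hI.1, hI.2.1.trans hQ.1, hI.2.2.trans hQ.2⟩

theorem InFan.of_le {S : Set T1.X} {φ : T1.X → T2.X} {x0 x : T1.X} {y : T2.X}
    (h : InFan T1 T2 S φ x0 y) (hle : T1.le x0 x) (hxy : T1.f x ≤ T2.f y) :
    InFan T1 T2 S φ x y := by
  obtain ⟨-, x1, hx1, rfl, hle1⟩ := h
  exact ⟨hxy, x1, hx1, rfl, T1.le_trans _ _ _ hle1 hle⟩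

theorem resArrowShift_of_not_inFan {S : Set T1.X} {φ : T1.X → T2.X} {x : T1.X} {y : T2.X}
    (h : ¬ InFan T1 T2 S φ x y) : resArrowShift T1 T2 S φ x y = T2.f y - T1.f x :=
  if_neg h

theorem resArrowShift_nonneg (S : Set T1.X) (φ : T1.X → T2.X) {x : T1.X} {y : T2.X}
    (hxy : T1.f x ≤ T2.f y) : 0 ≤ resArrowShift T1 T2 S φ x y := by
  unfold resArrowShift
  split_ifs <;> linarith

theorem resArrowShift_le_shift (S : Set T1.X) (φ : T1.X → T2.X) {x : T1.X} {y : T2.X}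
    (hxy : T1.f x ≤ T2.f y) : resArrowShift T1 T2 S φ x y ≤ T2.f y - T1.f x := by
  unfold resArrowShift
  split_ifs <;> linarith

theorem resArrowShift_le_of_le (S : Set T1.X) (φ : T1.X → T2.X) {x0 x : T1.X} {y : T2.X}
    (hle : T1.le x0 x) (hxy : T1.f x ≤ T2.f y) :
    resArrowShift T1 T2 S φ x y ≤ resArrowShift T1 T2 S φ x0 y := by
  have hx0x := T1.f_mono _ _ hle
  by_cases hfan : InFan T1 T2 S φ x y
  · rw [resArrowShift, if_pos hfan]
    exact resArrowShift_nonneg S φ (hx0x.trans hxy)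
  · have hfan0 : ¬ InFan T1 T2 S φ x0 y := fun h => hfan (h.of_le hle hxy)
    rw [resArrowShift_of_not_inFan hfan, resArrowShift_of_not_inFan hfan0]
    linarith

theorem resArrowShift_le_max_resMapShift {S SQ : Set T1.X} {φ φQ : T1.X → T2.X}
    {x : T1.X} {y : T2.X} (hxy : T1.f x ≤ T2.f y) :
    (resArrowShift T1 T2 S φ x y : EReal) ≤
      max (resArrowShift T1 T2 SQ φQ x y : EReal) (resMapShift T1 T2 S φ SQ φQ) := by
  by_cases hfan : InFan T1 T2 SQ φQ x y
  · obtain ⟨-, x0, hx0, rfl, hle⟩ := hfan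
    refine le_max_of_le_right (le_trans ?_ (le_sSup ⟨x0, hx0, rfl⟩))
    exact EReal.coe_le_coe_iff.2 (resArrowShift_le_of_le S φ hle hxy)
  · refine le_max_of_le_left ?_
    rw [resArrowShift_of_not_inFan hfan]
    exact_mod_cast resArrowShift_le_shift S φ hxy

theorem resMapShift_le_max {S S' : Set T1.X} {φ α : T1.X → T2.X} (SQ : Set T1.X)
    (φQ : T1.X → T2.X) (hα : ∀ x ∈ S', T1.f x ≤ T2.f (α x)) :
    resMapShift T1 T2 S φ S' α ≤
      max (resMapShift T1 T2 SQ φQ S' α) (resMapShift T1 T2 S φ SQ φQ) := by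
  refine sSup_le ?_
  rintro _ ⟨x, hx, rfl⟩
  exact (resArrowShift_le_max_resMapShift (hα x hx)).trans
    (max_le_max_right _ (le_sSup ⟨x, hx, rfl⟩))

theorem resMapShift_lt_of_finite {S SQ : Set T1.X} {φ φQ : T1.X → T2.X} {d : EReal}
    (hSQ : SQ.Finite) (hd : ⊥ < d)
    (h : ∀ x ∈ SQ, (resArrowShift T1 T2 S φ x (φQ x) : EReal) < d) :
    resMapShift T1 T2 S φ SQ φQ < d :=
  (hSQ.image _).sSup_lt hd (by rintro _ ⟨x, hx, rfl⟩; exact h x hx)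

end ResidualShift

section ResidualInterleaving

variable {T1 T2 : MergeTree} {S1 SQ1 S1' : Set T1.X} {φ φQ α : T1.X → T2.X}
  {S2 SQ2 S2' : Set T2.X} {ψ ψQ β : T2.X → T1.X}

theorem resInterShift_le_max (hα : ∀ x ∈ S1', T1.f x ≤ T2.f (α x))
    (hβ : ∀ y ∈ S2', T2.f y ≤ T1.f (β y)) :
    resInterShift T1 T2 S1 φ S2 ψ S1' α S2' β ≤
      max (resInterShift T1 T2 SQ1 φQ SQ2 ψQ S1' α S2' β)
        (resInterShift T1 T2 S1 φ S2 ψ SQ1 φQ SQ2 ψQ) := by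
  unfold resInterShift
  refine max_le ((resMapShift_le_max SQ1 φQ hα).trans ?_)
    ((resMapShift_le_max SQ2 ψQ hβ).trans ?_)
  · exact max_le_max (le_max_left _ _) (le_max_left _ _)
  · exact max_le_max (le_max_right _ _) (le_max_right _ _)

theorem resDist_le_resInterShift (hI : IsCompleteExtension T1 T2 S1 φ S2 ψ α β) :
    resDist T1 T2 S1 φ S2 ψ ≤ resInterShift T1 T2 S1 φ S2 ψ univ α univ β :=
  sInf_le ⟨α, β, hI, rfl⟩

end ResidualInterleaving

theorem resDist_ge_of_small_resArrowShift_general (T1 T2 : MergeTree)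
    (S1 : Set T1.X) (φ : T1.X → T2.X) (S2 : Set T2.X) (ψ : T2.X → T1.X)
    (hpos : 0 < resDist T1 T2 S1 φ S2 ψ)
    (SQ1 : Set T1.X) (φQ : T1.X → T2.X) (SQ2 : Set T2.X) (ψQ : T2.X → T1.X)
    (hQfin : SQ1.Finite ∧ SQ2.Finite)
    (hExt : InterExtends T1 T2 SQ1 φQ SQ2 ψQ S1 φ S2 ψ)
    (harr1 : ∀ x ∈ SQ1,
      ((resArrowShift T1 T2 S1 φ x (φQ x) : ℝ) : EReal) < resDist T1 T2 S1 φ S2 ψ)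
    (harr2 : ∀ y ∈ SQ2,
      ((resArrowShift T2 T1 S2 ψ y (ψQ y) : ℝ) : EReal) < resDist T1 T2 S1 φ S2 ψ) :
    resDist T1 T2 S1 φ S2 ψ ≤ resDist T1 T2 SQ1 φQ SQ2 ψQ := by
  set d := resDist T1 T2 S1 φ S2 ψ
  have hQ_small : resInterShift T1 T2 S1 φ S2 ψ SQ1 φQ SQ2 ψQ < d := by
    have hd : ⊥ < d := bot_le.trans_lt hpos
    exact max_lt (resMapShift_lt_of_finite hQfin.1 hd harr1)
      (resMapShift_lt_of_finite hQfin.2 hd harr2)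
  refine le_sInf ?_
  rintro _ ⟨α, β, hI, rfl⟩
  have hheight_α : ∀ x ∈ univ, T1.f x ≤ T2.f (α x) := hI.1.1.1
  have hheight_β : ∀ y ∈ univ, T2.f y ≤ T1.f (β y) := hI.1.2.1.1
  have hd_le : d ≤ max (resInterShift T1 T2 SQ1 φQ SQ2 ψQ univ α univ β)
      (resInterShift T1 T2 S1 φ S2 ψ SQ1 φQ SQ2 ψQ) :=
    (resDist_le_resInterShift (hI.of_interExtends hExt)).trans
      (resInterShift_le_max hheight_α hheight_β)
  exact (le_max_iff.1 hd_le).resolve_right hQ_small.not_ge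

/-- If P is finite with d_P(T₁,T₂) > 0 and Q is a finite partial
interleaving extending P all of whose arrows have P-residual shift strictly less than
d_P(T₁,T₂), then d_Q(T₁,T₂) ≥ d_P(T₁,T₂). -/
theorem resDist_ge_of_small_resArrowShift (T1 T2 : MergeTree)
    (S1 : Set T1.X) (φ : T1.X → T2.X) (S2 : Set T2.X) (ψ : T2.X → T1.X)
    (hP : IsPartialInterleaving T1 T2 S1 φ S2 ψ)
    (hfin : S1.Finite ∧ S2.Finite)
    (hpos : 0 < resDist T1 T2 S1 φ S2 ψ)
    (SQ1 : Set T1.X) (φQ : T1.X → T2.X) (SQ2 : Set T2.X) (ψQ : T2.X → T1.X)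
    (hQ : IsPartialInterleaving T1 T2 SQ1 φQ SQ2 ψQ)
    (hQfin : SQ1.Finite ∧ SQ2.Finite)
    (hExt : InterExtends T1 T2 SQ1 φQ SQ2 ψQ S1 φ S2 ψ)
    (harr1 : ∀ x ∈ SQ1,
      ((resArrowShift T1 T2 S1 φ x (φQ x) : ℝ) : EReal) < resDist T1 T2 S1 φ S2 ψ)
    (harr2 : ∀ y ∈ SQ2,
      ((resArrowShift T2 T1 S2 ψ y (ψQ y) : ℝ) : EReal) < resDist T1 T2 S1 φ S2 ψ) :
    resDist T1 T2 S1 φ S2 ψ ≤ resDist T1 T2 SQ1 φQ SQ2 ψQ :=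
  resDist_ge_of_small_resArrowShift_general T1 T2 S1 φ S2 ψ hpos SQ1 φQ SQ2 ψQ hQfin hExt harr1
    harr2
end

section
/- Let P be a dominant, finite partial interleaving between subsets of T₁ and T₂ with d_P(T₁, T₂) > 0. Then every minimal P-augmentation Q satisfies: (i) Q uses P, and (ii) every arrow a of the relative difference Q ∖ P has shift(a) = d_P(T₁, T₂). -/
open Set

/-!
Part (i) holds for every `P`-augmentation `Q`: for `x ∈ dom φ`, the arrow `(x, φQ x)` either
lies in the fan of `P`, which by monotonicity of `φ` forces `φQ x = φ x`, or has residual shift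
at least `shift(x, φ x) > d_P`.

For (ii), delete a point `x` of `dom(Q ∖ P)` from `Q`. By minimality the restriction is no
longer an augmentation, so its residual distance is at least `d_P`. Every complete extension
of `Q` also extends the restriction, and the deletion raises its residual shift at most to
`shift(x, φQ x)`; it does not raise it at all when the arrow of `x` lies in the fan of `P`,
which is forced when `shift(x, φQ x) > d_P` since `shift_P(Q) ≤ d_P`. As `d_Q < d_P`, both
`shift(x, φQ x) < d_P` and `shift(x, φQ x) > d_P` contradict minimality.
-/

section Residual

variable {A B : MergeTree}

lemma InFan.mono {S S' : Set A.X} {f : A.X → B.X} {x : A.X} {y : B.X} (hS : S ⊆ S')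
    (h : InFan A B S f x y) : InFan A B S' f x y :=
  let ⟨hxy, x0, hx0, hfx0, hle⟩ := h
  ⟨hxy, x0, hS hx0, hfx0, hle⟩

lemma inFan_diff_singleton_iff {S : Set A.X} {f : A.X → B.X} {x x0 x' : A.X} {y : B.X}
    (hx0 : x0 ∈ S) (hne : x0 ≠ x) (hfx0 : f x0 = f x) (hle : A.le x0 x) :
    InFan A B (S \ {x}) f x' y ↔ InFan A B S f x' y := by
  refine ⟨InFan.mono sdiff_subset, fun ⟨hxy, x1, hx1, hfx1, hle1⟩ => ?_⟩
  by_cases h : x1 = x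
  · subst h
    exact ⟨hxy, x0, ⟨hx0, hne⟩, hfx0.trans hfx1, A.le_trans _ _ _ hle hle1⟩
  · exact ⟨hxy, x1, ⟨hx1, h⟩, hfx1, hle1⟩

lemma resArrowShift_diff_singleton_le (S : Set A.X) (f : A.X → B.X) (x x' : A.X) (y : B.X) :
    resArrowShift A B (S \ {x}) f x' y ≤
      max (resArrowShift A B S f x' y) (B.f (f x) - A.f x) := by
  unfold resArrowShift
  by_cases hR : InFan A B (S \ {x}) f x' y
  · rw [if_pos hR, if_pos (hR.mono sdiff_subset)]
    exact le_max_left _ _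
  rw [if_neg hR]
  by_cases hS : InFan A B S f x' y
  · obtain ⟨hxy, x1, hx1, rfl, hle⟩ := hS
    obtain rfl : x1 = x := by_contra fun h => hR ⟨hxy, x1, ⟨hx1, h⟩, rfl, hle⟩
    have := A.f_mono _ _ hle
    exact le_max_of_le_right (by linarith)
  · rw [if_neg hS]
    exact le_max_left _ _

lemma resArrowShift_le_resMapShift {S S' : Set A.X} {f g : A.X → B.X} {x : A.X} (hx : x ∈ S') :
    ((resArrowShift A B S f x (g x) : ℝ) : EReal) ≤ resMapShift A B S f S' g :=
  le_sSup ⟨x, hx, rfl⟩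

lemma resMapShift_diff_singleton_le (S S' : Set A.X) (f g : A.X → B.X) (x : A.X) :
    resMapShift A B (S \ {x}) f S' g ≤
      max (resMapShift A B S f S' g) ((B.f (f x) - A.f x : ℝ) : EReal) := by
  refine sSup_le ?_
  rintro _ ⟨x', hx', rfl⟩
  rcases le_max_iff.1 (resArrowShift_diff_singleton_le S f x x' (g x')) with h | h
  · exact le_max_of_le_left ((EReal.coe_le_coe_iff.2 h).trans (resArrowShift_le_resMapShift hx'))
  · exact le_max_of_le_right (EReal.coe_le_coe_iff.2 h)

lemma resMapShift_diff_singleton_of_covered {S S' : Set A.X} {f g : A.X → B.X} {x x0 : A.X}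
    (hx0 : x0 ∈ S) (hne : x0 ≠ x) (hfx0 : f x0 = f x) (hle : A.le x0 x) :
    resMapShift A B (S \ {x}) f S' g = resMapShift A B S f S' g := by
  have harrow (x' : A.X) :
      resArrowShift A B (S \ {x}) f x' (g x') = resArrowShift A B S f x' (g x') := by
    unfold resArrowShift
    by_cases h : InFan A B S f x' (g x')
    · rw [if_pos h, if_pos ((inFan_diff_singleton_iff hx0 hne hfx0 hle).2 h)]
    · rw [if_neg h, if_neg (mt (inFan_diff_singleton_iff hx0 hne hfx0 hle).1 h)]
  simp only [resMapShift, harrow]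

lemma resInterShift_mono (S1 : Set A.X) (f : A.X → B.X) (S2 : Set B.X) (g : B.X → A.X)
    {S1' S1'' : Set A.X} (f' : A.X → B.X) {S2' S2'' : Set B.X} (g' : B.X → A.X)
    (h1 : S1' ⊆ S1'') (h2 : S2' ⊆ S2'') :
    resInterShift A B S1 f S2 g S1' f' S2' g' ≤ resInterShift A B S1 f S2 g S1'' f' S2'' g' :=
  max_le_max (sSup_le_sSup (image_mono h1)) (sSup_le_sSup (image_mono h2))

lemma resInterShift_comm (S1 : Set A.X) (f : A.X → B.X) (S2 : Set B.X) (g : B.X → A.X)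
    (S1' : Set A.X) (f' : A.X → B.X) (S2' : Set B.X) (g' : B.X → A.X) :
    resInterShift B A S2 g S1 f S2' g' S1' f' = resInterShift A B S1 f S2 g S1' f' S2' g' :=
  max_comm _ _

lemma IsPartialInterleaving.symm {S1 : Set A.X} {f : A.X → B.X} {S2 : Set B.X} {g : B.X → A.X}
    (h : IsPartialInterleaving A B S1 f S2 g) : IsPartialInterleaving B A S2 g S1 f :=
  ⟨h.2.1, h.1, fun y hy x hx hle => h.2.2.2 x hx y hy hle,
    fun y hy x hx hle => h.2.2.1 x hx y hy hle⟩

lemma IsPartialInterleaving.mono {S1 S1' : Set A.X} {f : A.X → B.X} {S2 S2' : Set B.X}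
    {g : B.X → A.X} (h : IsPartialInterleaving A B S1 f S2 g) (h1 : S1' ⊆ S1)
    (h2 : S2' ⊆ S2) :
    IsPartialInterleaving A B S1' f S2' g :=
  ⟨⟨fun x hx => h.1.1 x (h1 hx), fun x hx x' hx' => h.1.2 x (h1 hx) x' (h1 hx')⟩,
    ⟨fun y hy => h.2.1.1 y (h2 hy), fun y hy y' hy' => h.2.1.2 y (h2 hy) y' (h2 hy')⟩,
    fun x hx y hy => h.2.2.1 x (h1 hx) y (h2 hy), fun x hx y hy => h.2.2.2 x (h1 hx) y (h2 hy)⟩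

lemma InterExtends.symm {S1 S1' : Set A.X} {f f' : A.X → B.X} {S2 S2' : Set B.X}
    {g g' : B.X → A.X} (h : InterExtends A B S1 f S2 g S1' f' S2' g') :
    InterExtends B A S2 g S1 f S2' g' S1' f' :=
  ⟨h.2, h.1⟩

lemma IsCompleteExtension.mono {S1 S1' : Set A.X} {f : A.X → B.X} {S2 S2' : Set B.X}
    {g : B.X → A.X} {α : A.X → B.X} {β : B.X → A.X}
    (h : IsCompleteExtension A B S1 f S2 g α β) (h1 : S1' ⊆ S1) (h2 : S2' ⊆ S2) :
    IsCompleteExtension A B S1' f S2' g α β :=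
  ⟨h.1, ⟨subset_univ _, fun x hx => h.2.1.2 x (h1 hx)⟩,
    ⟨subset_univ _, fun y hy => h.2.2.2 y (h2 hy)⟩⟩

lemma IsCompleteExtension.symm {S1 : Set A.X} {f : A.X → B.X} {S2 : Set B.X} {g : B.X → A.X}
    {α : A.X → B.X} {β : B.X → A.X} (h : IsCompleteExtension A B S1 f S2 g α β) :
    IsCompleteExtension B A S2 g S1 f β α :=
  ⟨IsPartialInterleaving.symm h.1, h.2.symm⟩

lemma resDist_le_resInterShift_s14 {S1 : Set A.X} {f : A.X → B.X} {S2 : Set B.X} {g : B.X → A.X}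
    {α : A.X → B.X} {β : B.X → A.X} (hI : IsCompleteExtension A B S1 f S2 g α β) :
    resDist A B S1 f S2 g ≤ resInterShift A B S1 f S2 g univ α univ β :=
  sInf_le ⟨α, β, hI, rfl⟩

lemma resDist_comm_le (S1 : Set A.X) (f : A.X → B.X) (S2 : Set B.X) (g : B.X → A.X) :
    resDist B A S2 g S1 f ≤ resDist A B S1 f S2 g := by
  refine le_sInf ?_
  rintro _ ⟨α, β, hI, rfl⟩
  exact sInf_le ⟨β, α, hI.symm, (resInterShift_comm S1 f S2 g univ α univ β).symm⟩

lemma resDist_comm (S1 : Set A.X) (f : A.X → B.X) (S2 : Set B.X) (g : B.X → A.X) :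
    resDist B A S2 g S1 f = resDist A B S1 f S2 g :=
  le_antisymm (resDist_comm_le S1 f S2 g) (resDist_comm_le S2 g S1 f)

lemma resDist_diff_singleton_le (S1 : Set A.X) (f : A.X → B.X) (S2 : Set B.X) (g : B.X → A.X)
    (x : A.X) :
    resDist A B (S1 \ {x}) f S2 g ≤
      max (resDist A B S1 f S2 g) ((B.f (f x) - A.f x : ℝ) : EReal) := by
  refine le_of_forall_gt fun c hc => ?_
  obtain ⟨hdc, hxc⟩ := max_lt_iff.1 hc
  obtain ⟨_, ⟨α, β, hI, rfl⟩, hIc⟩ := sInf_lt_iff.1 hdc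
  refine (resDist_le_resInterShift_s14 (hI.mono sdiff_subset subset_rfl)).trans_lt (max_lt ?_ ?_)
  · exact (resMapShift_diff_singleton_le S1 univ f α x).trans_lt
      (max_lt ((le_max_left _ _).trans_lt hIc) hxc)
  · exact (le_max_right _ _).trans_lt hIc

lemma resDist_diff_singleton_le_of_covered {S1 : Set A.X} {f : A.X → B.X} {S2 : Set B.X}
    {g : B.X → A.X} {x x0 : A.X} (hx0 : x0 ∈ S1) (hne : x0 ≠ x) (hfx0 : f x0 = f x)
    (hle : A.le x0 x) : resDist A B (S1 \ {x}) f S2 g ≤ resDist A B S1 f S2 g := by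
  refine le_sInf ?_
  rintro _ ⟨α, β, hI, rfl⟩
  refine (resDist_le_resInterShift_s14 (hI.mono sdiff_subset subset_rfl)).trans_eq ?_
  rw [resInterShift, resInterShift, resMapShift_diff_singleton_of_covered hx0 hne hfx0 hle]

lemma UpMapExtends.uses_of_resMapShift_le {S SQ : Set A.X} {f fQ : A.X → B.X} {d : EReal}
    (hf : IsUpMap A B S f) (hdom : ∀ x ∈ S, d < ((B.f (f x) - A.f x : ℝ) : EReal))
    (hext : UpMapExtends A B SQ fQ S f) (hsh : resMapShift A B S f SQ fQ ≤ d) :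
    UpMapUses A B SQ fQ S f := by
  refine ⟨hext.1, fun x hx => ?_⟩
  have harrow : ((resArrowShift A B S f x (fQ x) : ℝ) : EReal) ≤ d :=
    (resArrowShift_le_resMapShift (hext.1 hx)).trans hsh
  by_cases hfan : InFan A B S f x (fQ x)
  · obtain ⟨-, x0, hx0, hfx0, hle⟩ := hfan
    rw [← hfx0]
    exact B.le_antisymm _ _ (hf.2 x0 hx0 x hx hle) (hfx0 ▸ hext.2 x hx)
  · rw [resArrowShift, if_neg hfan] at harrow
    have := B.f_mono _ _ (hext.2 x hx)
    exact absurd ((hdom x hx).trans_le (EReal.coe_le_coe_iff.2 (by linarith))) harrow.not_gt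

end Residual

section Augmentation

variable {A B : MergeTree} {S1 : Set A.X} {f : A.X → B.X} {S2 : Set B.X} {g : B.X → A.X}
  {SQ1 : Set A.X} {fQ : A.X → B.X} {SQ2 : Set B.X} {gQ : B.X → A.X}

lemma IsAugmentation.symm (hQ : IsAugmentation A B S1 f S2 g SQ1 fQ SQ2 gQ) :
    IsAugmentation B A S2 g S1 f SQ2 gQ SQ1 fQ := by
  obtain ⟨hQpi, hext, hsh, hlt⟩ := hQ
  refine ⟨hQpi.symm, hext.symm, ?_, ?_⟩
  · rwa [resInterShift_comm, resDist_comm]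
  · rwa [resDist_comm SQ1 fQ SQ2 gQ, resDist_comm S1 f S2 g]

lemma IsMinimalAugmentation.symm (hQ : IsMinimalAugmentation A B S1 f S2 g SQ1 fQ SQ2 gQ) :
    IsMinimalAugmentation B A S2 g S1 f SQ2 gQ SQ1 fQ := by
  refine ⟨hQ.1.symm, fun SR2 gR SR1 fR hR hext => ?_⟩
  obtain ⟨h1, h2, hf, hg⟩ := hQ.2 SR1 fR SR2 gR hR.symm hext.symm
  exact ⟨h2, h1, hg, hf⟩

lemma IsAugmentation.interUses (hP : IsPartialInterleaving A B S1 f S2 g)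
    (hdom : DominantInter A B S1 f S2 g) (hQ : IsAugmentation A B S1 f S2 g SQ1 fQ SQ2 gQ) :
    InterUses A B SQ1 fQ SQ2 gQ S1 f S2 g :=
  ⟨hQ.2.1.1.uses_of_resMapShift_le hP.1 hdom.1 ((le_max_left _ _).trans hQ.2.2.1),
    hQ.2.1.2.uses_of_resMapShift_le hP.2.1 hdom.2 ((le_max_right _ _).trans hQ.2.2.1)⟩

lemma IsMinimalAugmentation.resDist_le_of_ssubset
    (hQ : IsMinimalAugmentation A B S1 f S2 g SQ1 fQ SQ2 gQ) {SR1 : Set A.X} (hS1 : S1 ⊆ SR1)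
    (hSR1 : SR1 ⊂ SQ1) : resDist A B S1 f S2 g ≤ resDist A B SR1 fQ SQ2 gQ := by
  obtain ⟨⟨hQpi, ⟨⟨-, hle1⟩, hext2⟩, hsh, -⟩, hmin⟩ := hQ
  by_contra! hlt
  have hR : IsAugmentation A B S1 f S2 g SR1 fQ SQ2 gQ :=
    ⟨hQpi.mono hSR1.subset subset_rfl, ⟨⟨hS1, hle1⟩, hext2⟩,
      (resInterShift_mono S1 f S2 g fQ gQ hSR1.subset subset_rfl).trans hsh, hlt⟩
  have hsame := hmin _ _ _ _ hR
    ⟨⟨hSR1.subset, fun _ _ => B.le_refl _⟩, ⟨subset_rfl, fun _ _ => A.le_refl _⟩⟩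
  exact hSR1.ne hsame.1.symm

lemma IsMinimalAugmentation.shift_eq_resDist
    (hQ : IsMinimalAugmentation A B S1 f S2 g SQ1 fQ SQ2 gQ) (huse : UpMapUses A B SQ1 fQ S1 f) :
    ∀ x ∈ relDiffDom SQ1 fQ S1 f,
      ((B.f (fQ x) - A.f x : ℝ) : EReal) = resDist A B S1 f S2 g := by
  rintro x ⟨hxQ, hxP⟩
  have hxS : x ∉ S1 := fun h => hxP ⟨h, huse.2 x h⟩
  have hR : resDist A B S1 f S2 g ≤ resDist A B (SQ1 \ {x}) fQ SQ2 gQ :=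
    hQ.resDist_le_of_ssubset (subset_sdiff_singleton huse.1 hxS)
      (sdiff_singleton_ssubset.2 hxQ)
  obtain ⟨⟨-, -, hsh, hlt⟩, -⟩ := hQ
  rcases lt_trichotomy ((B.f (fQ x) - A.f x : ℝ) : EReal) (resDist A B S1 f S2 g)
    with hs | hs | hs
  · have hdrop := resDist_diff_singleton_le SQ1 fQ SQ2 gQ x
    exact (hR.trans_lt (hdrop.trans_lt (max_lt hlt hs))).false.elim
  · exact hs
  · have harrow : ((resArrowShift A B S1 f x (fQ x) : ℝ) : EReal) ≤ resDist A B S1 f S2 g :=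
      (resArrowShift_le_resMapShift hxQ).trans ((le_max_left _ _).trans hsh)
    have hfan : InFan A B S1 f x (fQ x) := by
      by_contra h
      rw [resArrowShift, if_neg h] at harrow
      exact harrow.not_gt hs
    obtain ⟨-, x0, hx0, hfx0, hle⟩ := hfan
    have hcov := resDist_diff_singleton_le_of_covered (S2 := SQ2) (g := gQ) (huse.1 hx0)
      (ne_of_mem_of_not_mem hx0 hxS) ((huse.2 x0 hx0).trans hfx0) hle
    exact (hR.trans_lt (hcov.trans_lt hlt)).false.elim

end Augmentation

theorem minimal_augmentation_uses_and_shift_eq_general (T1 T2 : MergeTree)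
    (S1 : Set T1.X) (φ : T1.X → T2.X) (S2 : Set T2.X) (ψ : T2.X → T1.X)
    (hP : IsPartialInterleaving T1 T2 S1 φ S2 ψ)
    (hdom : DominantInter T1 T2 S1 φ S2 ψ)
    (SQ1 : Set T1.X) (φQ : T1.X → T2.X) (SQ2 : Set T2.X) (ψQ : T2.X → T1.X)
    (hQ : IsMinimalAugmentation T1 T2 S1 φ S2 ψ SQ1 φQ SQ2 ψQ) :
    InterUses T1 T2 SQ1 φQ SQ2 ψQ S1 φ S2 ψ ∧
    (∀ x ∈ relDiffDom SQ1 φQ S1 φ,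
      ((T2.f (φQ x) - T1.f x : ℝ) : EReal) = resDist T1 T2 S1 φ S2 ψ) ∧
    (∀ y ∈ relDiffDom SQ2 ψQ S2 ψ,
      ((T1.f (ψQ y) - T2.f y : ℝ) : EReal) = resDist T1 T2 S1 φ S2 ψ) := by
  have huse := hQ.1.interUses hP hdom
  refine ⟨huse, hQ.shift_eq_resDist huse.1, fun y hy => ?_⟩
  rw [← resDist_comm]
  exact hQ.symm.shift_eq_resDist huse.2 y hy

/-- If P is dominant and finite with d_P(T₁,T₂) > 0, then any minimal
P-augmentation Q (i) uses P and (ii) every arrow of Q ∖ P has shift exactly d_P(T₁,T₂). -/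
theorem minimal_augmentation_uses_and_shift_eq (T1 T2 : MergeTree)
    (S1 : Set T1.X) (φ : T1.X → T2.X) (S2 : Set T2.X) (ψ : T2.X → T1.X)
    (hP : IsPartialInterleaving T1 T2 S1 φ S2 ψ)
    (hfin : S1.Finite ∧ S2.Finite)
    (hpos : 0 < resDist T1 T2 S1 φ S2 ψ)
    (hdom : DominantInter T1 T2 S1 φ S2 ψ)
    (SQ1 : Set T1.X) (φQ : T1.X → T2.X) (SQ2 : Set T2.X) (ψQ : T2.X → T1.X)
    (hQ : IsMinimalAugmentation T1 T2 S1 φ S2 ψ SQ1 φQ SQ2 ψQ) :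
    InterUses T1 T2 SQ1 φQ SQ2 ψQ S1 φ S2 ψ ∧
    (∀ x ∈ relDiffDom SQ1 φQ S1 φ,
      ((T2.f (φQ x) - T1.f x : ℝ) : EReal) = resDist T1 T2 S1 φ S2 ψ) ∧
    (∀ y ∈ relDiffDom SQ2 ψQ S2 ψ,
      ((T1.f (ψQ y) - T2.f y : ℝ) : EReal) = resDist T1 T2 S1 φ S2 ψ) :=
  minimal_augmentation_uses_and_shift_eq_general T1 T2 S1 φ S2 ψ hP hdom SQ1 φQ SQ2 ψQ hQ
end
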